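/- Let β, N₀, κ, ν, M > 0 and η ≥ 0 be real numbers, and let u be the unique positive real number satisfying (u − 1)e^u = κ M² β ν / N₀ − 1. Then the maximum over z > 0 of g(z) = log₂(1 + (Mβ/N₀) z) / (z/κ + νM + η·log₂(1 + (Mβ/N₀) z)) equals u·log₂(e) / ( N₀(e^u − 1)/(κMβ) + νM + η·u·log₂(e) ); that is, g(N₀(e^u − 1)/(Mβ)) has exactly this value. -/

import Mathlib

/-!
Write `t = 1 + (Mβ/N₀) z`. The defining equation of `u` turns the bound `g3 z ≤ EE_max` into
`e^u log t ≤ t + (u - 1) e^u`, i.e. into the fact that the concave function `log` lies below its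
tangent line at `e^u`. The `η`-terms do not matter because `r ↦ r / (1 + η r)` is monotone, and at
`z*` one has `t = e^u`, so equality holds.
-/

/-- The energy efficiency as a function of the power spectral density `z = P/B`,
with negligible fixed circuit power and per-antenna transceiver power. -/
noncomputable def g3 (β N₀ κ ν η M z : ℝ) : ℝ :=
  Real.logb 2 (1 + (M * β / N₀) * z) /
    (z / κ + ν * M + η * Real.logb 2 (1 + (M * β / N₀) * z))

open Real

lemma Real.log_le_div_exp_add_sub_one (u : ℝ) {t : ℝ} (ht : 0 < t) :
    log t ≤ t / exp u + u - 1 := by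
  have h := log_le_sub_one_of_pos (div_pos ht (exp_pos u))
  rw [log_div ht.ne' (exp_pos u).ne', log_exp] at h
  linarith

lemma div_add_mul_le_div_add_mul {p q P Q η : ℝ} (hη : 0 ≤ η) (hp : 0 ≤ p) (hq : 0 < q)
    (hP : 0 ≤ P) (hQ : 0 < Q) (h : p * Q ≤ P * q) :
    p / (q + η * p) ≤ P / (Q + η * P) := by
  rw [div_le_div_iff₀ (by positivity) (by positivity)]
  linear_combination h

section EnergyEfficiency

variable {β N₀ κ ν M u : ℝ}

lemma log_mul_le_of_sub_one_mul_exp_eq (hβ : 0 < β) (hN : 0 < N₀) (hκ : 0 < κ) (hM : 0 < M)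
    (hu : 0 ≤ u) (hue : (u - 1) * exp u = κ * M ^ 2 * β * ν / N₀ - 1) {z : ℝ} (hz : 0 ≤ z) :
    log (1 + M * β / N₀ * z) * (N₀ * (exp u - 1) / (κ * M * β) + ν * M) ≤
      u * (z / κ + ν * M) := by
  set t := 1 + M * β / N₀ * z with ht
  have hνM : ν * M = ((u - 1) * exp u + 1) / (κ * M * β / N₀) := by
    rw [hue]; field_simp; ring
  have hQ : N₀ * (exp u - 1) / (κ * M * β) + ν * M = u * exp u / (κ * M * β / N₀) := by
    rw [hνM]; field_simp; ring
  have hq : z / κ + ν * M = (t + (u - 1) * exp u) / (κ * M * β / N₀) := by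
    rw [hνM, ht]; field_simp; ring
  have tangent := log_le_div_exp_add_sub_one u (show 0 < t by positivity)
  rw [hQ, hq]
  calc log t * (u * exp u / (κ * M * β / N₀))
      = u * exp u / (κ * M * β / N₀) * log t := mul_comm _ _
    _ ≤ u * exp u / (κ * M * β / N₀) * (t / exp u + u - 1) := by gcongr
    _ = u * ((t + (u - 1) * exp u) / (κ * M * β / N₀)) := by field_simp; ring

lemma g3_at_optimum (hβ : β ≠ 0) (hN : N₀ ≠ 0) (hM : M ≠ 0) (η : ℝ) :
    g3 β N₀ κ ν η M (N₀ * (exp u - 1) / (M * β)) =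
      u * logb 2 (exp 1) /
        (N₀ * (exp u - 1) / (κ * M * β) + ν * M + η * u * logb 2 (exp 1)) := by
  have ht : 1 + M * β / N₀ * (N₀ * (exp u - 1) / (M * β)) = exp u := by
    field_simp; ring
  have hlog : logb 2 (exp u) = u * logb 2 (exp 1) := by
    simp only [logb, log_exp]; ring
  rw [g3, ht, hlog, div_div]
  ring_nf

end EnergyEfficiency

/-- Equation (12) of the paper: the maximum of `g3` over `z > 0` equals
`u log₂(e) / (N₀(e^u - 1)/(κMβ) + νM + η u log₂(e))`, attained at
`z* = N₀(e^u - 1)/(Mβ)`. -/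
theorem stmt_3 (β N₀ κ ν M η u : ℝ) (hβ : 0 < β) (hN : 0 < N₀) (hκ : 0 < κ)
    (hν : 0 < ν) (hM : 0 < M) (hη : 0 ≤ η) (hu : 0 < u)
    (hue : (u - 1) * Real.exp u = κ * M ^ 2 * β * ν / N₀ - 1) :
    (∀ z : ℝ, 0 < z →
      g3 β N₀ κ ν η M z ≤
        u * Real.logb 2 (Real.exp 1) /
          (N₀ * (Real.exp u - 1) / (κ * M * β) + ν * M +
            η * u * Real.logb 2 (Real.exp 1))) ∧
    g3 β N₀ κ ν η M (N₀ * (Real.exp u - 1) / (M * β)) =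
      u * Real.logb 2 (Real.exp 1) /
        (N₀ * (Real.exp u - 1) / (κ * M * β) + ν * M +
          η * u * Real.logb 2 (Real.exp 1)) := by
  refine ⟨fun z hz => ?_, g3_at_optimum hβ.ne' hN.ne' hM.ne' η⟩
  have hlog₂e : 0 < logb 2 (exp 1) := logb_pos one_lt_two (one_lt_exp_iff.2 one_pos)
  have hQ : 0 < N₀ * (exp u - 1) / (κ * M * β) + ν * M := by
    have : 0 < exp u - 1 := sub_pos.2 (one_lt_exp_iff.2 hu)
    positivity
  rw [g3, mul_assoc η]
  refine div_add_mul_le_div_add_mul hη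
    (logb_nonneg one_lt_two (le_add_of_nonneg_right (by positivity)))
    (by positivity) (by positivity) hQ ?_
  have hkey := log_mul_le_of_sub_one_mul_exp_eq hβ hN hκ hM hu.le hue hz.le
  rw [show logb 2 (1 + M * β / N₀ * z) = logb 2 (exp 1) * log (1 + M * β / N₀ * z) by
    simp only [logb, log_exp]; ring]
  linarith [mul_le_mul_of_nonneg_left hkey hlog₂e.le]
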